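/- Equivalence of pointwise non-linear activation (Theorem 3.3) for LeakyReLU: let σ(t) = max(kt, t) with 0 < k < 1 applied coordinatewise, and α = 1/β. For x ∈ H^{n,β} (x ≠ origin), define σ^{⊗β}(x) = exp_0^β((0, σ(v̂))) where log_0^β(x) = (0,v̂), and for y ∈ D^{n,α} (y ≠ 0), σ^{⊗α}(y) = exp_0^α(σ(log_0^α(y))). Then p(σ^{⊗β}(x)) = σ^{⊗α}(p(x)), where p is the standard diffeomorphism from H^{n,β} to D^{n,α}. -/

import Mathlib

noncomputable section
open Finset

/-- Lorentzian scalar product on ℝ^{n+1}. -/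
def lprod {n : ℕ} (x y : Fin (n + 1) → ℝ) : ℝ :=
  -(x 0 * y 0) + ∑ i : Fin n, x i.succ * y i.succ

/-- The hyperboloid H^{n,β}. -/
def onH {n : ℕ} (β : ℝ) (x : Fin (n + 1) → ℝ) : Prop :=
  lprod x x = -β ∧ 0 < x 0

/-- The origin (√β, 0, …, 0) of the hyperboloid. -/
def orig (n : ℕ) (β : ℝ) : Fin (n + 1) → ℝ :=
  Fin.cons (Real.sqrt β) (fun _ => 0)

/-- Lorentzian norm. -/
def lnorm {n : ℕ} (v : Fin (n + 1) → ℝ) : ℝ := Real.sqrt (lprod v v)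

/-- Euclidean norm of a vector in ℝ^n. -/
def enorm {n : ℕ} (v : Fin n → ℝ) : ℝ := Real.sqrt (∑ i : Fin n, (v i) ^ 2)

/-- Exponential map at the origin of the hyperboloid. -/
def expO {n : ℕ} (β : ℝ) (v : Fin (n + 1) → ℝ) : Fin (n + 1) → ℝ :=
  fun i => Real.cosh (lnorm v / Real.sqrt β) * orig n β i
    + Real.sqrt β * Real.sinh (lnorm v / Real.sqrt β) * (v i / lnorm v)

/-- Inverse hyperbolic cosine. -/
def arcosh (x : ℝ) : ℝ := Real.log (x + Real.sqrt (x ^ 2 - 1))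

/-- Intrinsic distance on the hyperboloid. -/
def dH {n : ℕ} (β : ℝ) (x y : Fin (n + 1) → ℝ) : ℝ :=
  Real.sqrt β * arcosh (-(lprod x y) / β)

/-- Logarithmic map at the origin of the hyperboloid. -/
def logO {n : ℕ} (β : ℝ) (x : Fin (n + 1) → ℝ) : Fin (n + 1) → ℝ :=
  fun i => dH β (orig n β) x *
    ((x i + (1 / β) * lprod (orig n β) x * orig n β i) /
      lnorm (fun j => x j + (1 / β) * lprod (orig n β) x * orig n β j))

/-- Squared Lorentzian distance. -/
def dL2 {n : ℕ} (β : ℝ) (x y : Fin (n + 1) → ℝ) : ℝ := -2 * β - 2 * lprod x y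

/-- Inverse hyperbolic tangent. -/
def artanh (x : ℝ) : ℝ := Real.log ((1 + x) / (1 - x)) / 2

/-- Exponential map at the origin of the Poincaré ball. -/
def expD {n : ℕ} (α : ℝ) (v : Fin n → ℝ) : Fin n → ℝ :=
  fun i => Real.tanh (Real.sqrt α * _root_.enorm v) * (v i / (Real.sqrt α * _root_.enorm v))

/-- Logarithmic map at the origin of the Poincaré ball. -/
def logD {n : ℕ} (α : ℝ) (y : Fin n → ℝ) : Fin n → ℝ :=
  fun i => artanh (Real.sqrt α * _root_.enorm y) * (y i / (Real.sqrt α * _root_.enorm y))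

/-- Coordinatewise LeakyReLU. -/
def leakyRelu {n : ℕ} (k : ℝ) (v : Fin n → ℝ) : Fin n → ℝ :=
  fun i => max (k * v i) (v i)

/-- Projection from the hyperboloid to the Poincaré ball. -/
def toBall {n : ℕ} (β : ℝ) (x : Fin (n + 1) → ℝ) : Fin n → ℝ :=
  fun i => Real.sqrt β * x i.succ / (Real.sqrt β + x 0)

/-- Lorentzian pointwise non-linear activation (for LeakyReLU). -/
def lact {n : ℕ} (β k : ℝ) (x : Fin (n + 1) → ℝ) : Fin (n + 1) → ℝ :=
  expO β (Fin.cons 0 (leakyRelu k (Fin.tail (logO β x))))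

/-- Möbius pointwise non-linear activation (for LeakyReLU). -/
def mact {n : ℕ} (α k : ℝ) (y : Fin n → ℝ) : Fin n → ℝ :=
  expD α (leakyRelu k (logD α y))

/-! Both activations are LeakyReLU conjugated by the exponential map at the origin, and the
projection `p` matches the two tangent spaces up to the factor `1/2`:
`p ∘ exp₀^β ∘ (0, ·) = exp₀^α ∘ (½ ·)` by the half-angle formula `tanh (t/2) = sinh t / (1 + cosh t)`,
and `log₀^α ∘ p = ½ log₀^β` because `arcosh (x₀/√β) = 2 artanh (‖x̂‖/(√β + x₀))` on the hyperboloid.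
Positive homogeneity of LeakyReLU lets the factor `½` pass through it. -/

lemma Real.tanh_half_eq_sinh_div (t : ℝ) :
    Real.tanh (t / 2) = Real.sinh t / (1 + Real.cosh t) := by
  obtain ⟨u, rfl⟩ : ∃ u, t = 2 * u := ⟨t / 2, by ring⟩
  have hc : Real.cosh u ≠ 0 := (Real.cosh_pos u).ne'
  rw [mul_div_cancel_left₀ u two_ne_zero, Real.sinh_two_mul, Real.cosh_two_mul, Real.sinh_sq,
    Real.tanh_eq_sinh_div_cosh,
    show 1 + (Real.cosh u ^ 2 + (Real.cosh u ^ 2 - 1)) = 2 * Real.cosh u ^ 2 by ring]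
  field_simp

lemma arcosh_div_eq_two_mul_artanh {b s x₀ : ℝ} (hb : 0 < b) (hs : 0 ≤ s) (hx₀ : 0 < x₀)
    (h : x₀ ^ 2 = b ^ 2 + s ^ 2) :
    arcosh (x₀ / b) = 2 * artanh (s / (b + x₀)) := by
  have hbx : s < b + x₀ := by nlinarith
  have hsq : (x₀ / b) ^ 2 - 1 = (s / b) ^ 2 := by
    field_simp
    linarith
  have hne : b + x₀ - s ≠ 0 := by linarith
  rw [arcosh, artanh, hsq, Real.sqrt_sq (by positivity), mul_div_cancel₀ _ two_ne_zero]
  congr 1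
  field_simp
  nlinarith

lemma leakyRelu_smul {n : ℕ} (k : ℝ) {c : ℝ} (hc : 0 ≤ c) (v : Fin n → ℝ) :
    leakyRelu k (c • v) = c • leakyRelu k v := by
  funext i
  simp only [leakyRelu, Pi.smul_apply, smul_eq_mul, mul_left_comm k c, mul_max_of_nonneg _ _ hc]

lemma enorm_smul_eq {n : ℕ} (c : ℝ) (v : Fin n → ℝ) :
    _root_.enorm (c • v) = |c| * _root_.enorm v := by
  simp only [_root_.enorm, Pi.smul_apply, smul_eq_mul, mul_pow, ← Finset.mul_sum,
    Real.sqrt_mul (sq_nonneg c), Real.sqrt_sq_eq_abs]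

lemma lnorm_cons_zero {n : ℕ} (u : Fin n → ℝ) :
    lnorm (Fin.cons 0 u : Fin (n + 1) → ℝ) = _root_.enorm u := by
  simp only [lnorm, lprod, _root_.enorm, Fin.cons_zero, Fin.cons_succ, mul_zero, neg_zero,
    zero_add, sq]

lemma lprod_orig_left {n : ℕ} (β : ℝ) (x : Fin (n + 1) → ℝ) :
    lprod (orig n β) x = -(Real.sqrt β * x 0) := by
  simp [lprod, orig]

lemma enorm_tail_sq_of_onH {n : ℕ} {β : ℝ} {x : Fin (n + 1) → ℝ} (hx : onH β x) :
    _root_.enorm (Fin.tail x) ^ 2 = x 0 ^ 2 - β := by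
  have h := hx.1
  simp only [lprod] at h
  rw [_root_.enorm, Real.sq_sqrt (by positivity)]
  simp only [Fin.tail, sq]
  linarith

lemma toBall_eq_smul_tail {n : ℕ} (β : ℝ) (x : Fin (n + 1) → ℝ) :
    toBall β x = (Real.sqrt β / (Real.sqrt β + x 0)) • Fin.tail x := by
  funext i
  simp only [toBall, Pi.smul_apply, smul_eq_mul, Fin.tail]
  ring

lemma toBall_expO_cons_zero {n : ℕ} {β : ℝ} (hβ : 0 < β) (u : Fin n → ℝ) :
    toBall β (expO β (Fin.cons 0 u)) = expD (1 / β) ((1 / 2 : ℝ) • u) := by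
  have hb : 0 < Real.sqrt β := Real.sqrt_pos.2 hβ
  have hc : 0 < 1 + Real.cosh (_root_.enorm u / Real.sqrt β) := by positivity
  have hT : Real.sqrt (1 / β) * _root_.enorm ((1 / 2 : ℝ) • u) =
      _root_.enorm u / Real.sqrt β / 2 := by
    rw [enorm_smul_eq, abs_of_pos one_half_pos, one_div, Real.sqrt_inv]
    ring
  funext i
  simp only [toBall, expO, expD, hT, lnorm_cons_zero, orig, Fin.cons_zero, Fin.cons_succ,
    Pi.smul_apply, smul_eq_mul, mul_zero, zero_div, add_zero, Real.tanh_half_eq_sinh_div]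
  field_simp
  ring

lemma tail_logO_eq_smul {n : ℕ} {β : ℝ} (hβ : 0 < β) (x : Fin (n + 1) → ℝ) :
    Fin.tail (logO β x) =
      (Real.sqrt β * arcosh (x 0 / Real.sqrt β) / _root_.enorm (Fin.tail x)) • Fin.tail x := by
  have hb : 0 < Real.sqrt β := Real.sqrt_pos.2 hβ
  have hproj : (fun j => x j + 1 / β * lprod (orig n β) x * orig n β j) =
      Fin.cons 0 (Fin.tail x) := by
    funext j
    refine Fin.cases ?_ (fun i => ?_) j
    · rw [lprod_orig_left]
      simp only [orig, Fin.cons_zero]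
      field_simp
      rw [Real.sq_sqrt hβ.le]
      ring
    · simp [orig, Fin.tail]
  have hdH : dH β (orig n β) x = Real.sqrt β * arcosh (x 0 / Real.sqrt β) := by
    rw [dH, lprod_orig_left, neg_neg, (div_eq_div_iff hβ.ne' hb.ne').mpr]
    linear_combination x 0 * Real.mul_self_sqrt hβ.le
  funext i
  simp only [Fin.tail, logO, hproj, lnorm_cons_zero, hdH, Pi.smul_apply, smul_eq_mul]
  simp [orig]
  ring

lemma logD_toBall {n : ℕ} {β : ℝ} (hβ : 0 < β) {x : Fin (n + 1) → ℝ} (hx : onH β x) :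
    logD (1 / β) (toBall β x) = (1 / 2 : ℝ) • Fin.tail (logO β x) := by
  have hb : 0 < Real.sqrt β := Real.sqrt_pos.2 hβ
  have hs : 0 ≤ _root_.enorm (Fin.tail x) := Real.sqrt_nonneg _
  have hx₀ : x 0 ^ 2 = Real.sqrt β ^ 2 + _root_.enorm (Fin.tail x) ^ 2 := by
    rw [enorm_tail_sq_of_onH hx, Real.sq_sqrt hβ.le]
    ring
  have hd : 0 < Real.sqrt β + x 0 := by linarith [hx.2]
  have hμ : Real.sqrt (1 / β) * _root_.enorm (toBall β x) =
      _root_.enorm (Fin.tail x) / (Real.sqrt β + x 0) := by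
    rw [toBall_eq_smul_tail, enorm_smul_eq, abs_of_pos (by positivity), one_div, Real.sqrt_inv]
    field_simp
  rw [tail_logO_eq_smul hβ, arcosh_div_eq_two_mul_artanh hb hs hx.2 hx₀]
  funext i
  simp only [logD, hμ]
  simp only [toBall_eq_smul_tail, Pi.smul_apply, smul_eq_mul]
  field_simp

theorem lact_equiv_mact_general {n : ℕ} {β α k : ℝ} (hβ : 0 < β) (hα : α = 1 / β)
    {x : Fin (n + 1) → ℝ} (hx : onH β x) :
    toBall β (lact β k x) = mact α k (toBall β x) := by
  subst hα
  calc toBall β (lact β k x)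
      = expD (1 / β) ((1 / 2 : ℝ) • leakyRelu k (Fin.tail (logO β x))) :=
        toBall_expO_cons_zero hβ _
    _ = expD (1 / β) (leakyRelu k ((1 / 2 : ℝ) • Fin.tail (logO β x))) := by
        rw [leakyRelu_smul k one_half_pos.le]
    _ = mact (1 / β) k (toBall β x) := by
        rw [mact, logD_toBall hβ hx]

theorem lact_equiv_mact {n : ℕ} {β α k : ℝ} (hβ : 0 < β) (hα : α = 1 / β)
    (hk0 : 0 < k) (hk1 : k < 1)
    {x : Fin (n + 1) → ℝ} (hx : onH β x) (hx0 : x ≠ orig n β) :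
    toBall β (lact β k x) = mact α k (toBall β x) :=
  lact_equiv_mact_general hβ hα hx
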